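/- Let T : M_{d₁}(ℂ) → M_{d₂}(ℂ) be a quantum channel, let σ, ρ be positive definite states on M_{d₁}(ℂ) such that σ_T := T(σ) and ρ_T := T(ρ) are positive definite, and let V : ℂ^{d₁} → ℂ^{d₂} ⊗ ℂ^{s} be an isometry providing a Stinespring dilation of T, i.e. T(ω) = tr₂[V ω V*] for all ω ∈ M_{d₁}(ℂ), where tr₂ denotes the partial trace over the factor ℂ^{s}. If V σ^{1/2} V* (σ_T^{−1/2} Γ_T^{1/2} σ_T^{1/2} ⊗ I_s) = V Γ^{1/2} σ^{1/2} V*, then σ^{−1} ρ = T*(σ_T^{−1} ρ_T). -/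

import Mathlib

open Matrix MeasureTheory Filter Topology Kronecker ComplexOrder

/-- Apply a real function to a matrix via the functional calculus for Hermitian
matrices (and return `0` on non-Hermitian input). -/
noncomputable def mfun {d : ℕ} (f : ℝ → ℝ) (A : Matrix (Fin d) (Fin d) ℂ) :
    Matrix (Fin d) (Fin d) ℂ :=
  if hA : A.IsHermitian then hA.cfc f else 0

/-- Square root of a Hermitian positive semidefinite matrix. -/
noncomputable def msqrt {d : ℕ} (A : Matrix (Fin d) (Fin d) ℂ) : Matrix (Fin d) (Fin d) ℂ :=
  mfun Real.sqrt A

/-- Inverse square root of a Hermitian positive semidefinite matrix (Moore–Penrose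
pseudoinverse of the square root in the singular case, since `(0 : ℝ)⁻¹ = 0`). -/
noncomputable def misqrt {d : ℕ} (A : Matrix (Fin d) (Fin d) ℂ) : Matrix (Fin d) (Fin d) ℂ :=
  mfun (fun x => (Real.sqrt x)⁻¹) A

/-- Inverse of a Hermitian matrix (Moore–Penrose pseudoinverse in the singular case). -/
noncomputable def minv {d : ℕ} (A : Matrix (Fin d) (Fin d) ℂ) : Matrix (Fin d) (Fin d) ℂ :=
  mfun (fun x => x⁻¹) A

/-- Logarithm of a positive definite matrix. -/
noncomputable def mlog {d : ℕ} (A : Matrix (Fin d) (Fin d) ℂ) : Matrix (Fin d) (Fin d) ℂ :=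
  mfun Real.log A

/-- Frobenius (Schatten-2) norm ‖A‖₂ = tr(AᴴA)^(1/2). -/
noncomputable def frob {n : Type*} [Fintype n] (A : Matrix n n ℂ) : ℝ :=
  Real.sqrt (Matrix.trace (Aᴴ * A)).re

/-- Operator norm ‖A‖∞ of a matrix, acting on the Euclidean space ℂᵈ. -/
noncomputable def opNorm {n : Type*} [Fintype n] [DecidableEq n] (A : Matrix n n ℂ) : ℝ :=
  ‖LinearMap.toContinuousLinearMap (Matrix.toEuclideanLin A)‖

/-- The Belavkin–Staszewski relative entropy
`Ŝ_BS(σ‖ρ) = −tr[σ log(σ^{−1/2} ρ σ^{−1/2})]`. -/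
noncomputable def BS {d : ℕ} (σ ρ : Matrix (Fin d) (Fin d) ℂ) : ℝ :=
  -(Matrix.trace (σ * mlog (misqrt σ * ρ * misqrt σ))).re

/-- The maximal f-divergence `Ŝ_f(σ‖ρ) = tr[ρ^{1/2} f(ρ^{−1/2} σ ρ^{−1/2}) ρ^{1/2}]`. -/
noncomputable def hatS {d : ℕ} (f : ℝ → ℝ) (σ ρ : Matrix (Fin d) (Fin d) ℂ) : ℝ :=
  (Matrix.trace (msqrt ρ * mfun f (misqrt ρ * σ * misqrt ρ) * msqrt ρ)).re

/-- The Umegaki relative entropy `D(σ‖ρ) = tr[σ (log σ − log ρ)]`. -/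
noncomputable def relEnt {d : ℕ} (σ ρ : Matrix (Fin d) (Fin d) ℂ) : ℝ :=
  (Matrix.trace (σ * (mlog σ - mlog ρ))).re

/-- The Choi matrix of a linear map between matrix algebras. -/
noncomputable def choi {d₁ d₂ : ℕ} (T : Matrix (Fin d₁) (Fin d₁) ℂ →ₗ[ℂ] Matrix (Fin d₂) (Fin d₂) ℂ) :
    Matrix (Fin d₁ × Fin d₂) (Fin d₁ × Fin d₂) ℂ :=
  Matrix.of fun p q => T (Matrix.single p.1 q.1 1) p.2 q.2

/-- A quantum channel: a completely positive (equivalently, with positive semidefinite Choi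
matrix) trace-preserving linear map. -/
def IsCPTP {d₁ d₂ : ℕ} (T : Matrix (Fin d₁) (Fin d₁) ℂ →ₗ[ℂ] Matrix (Fin d₂) (Fin d₂) ℂ) :
    Prop :=
  (choi T).PosSemidef ∧ ∀ A, (T A).trace = A.trace

/-- Partial trace over the second tensor factor. -/
noncomputable def ptrace2 {d₂ s : ℕ} (M : Matrix (Fin d₂ × Fin s) (Fin d₂ × Fin s) ℂ) :
    Matrix (Fin d₂) (Fin d₂) ℂ :=
  Matrix.of fun i j => ∑ k : Fin s, M (i, k) (j, k)

/-- The Loewner order: `A ≤ B` iff `B - A` is positive semidefinite. -/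
def Loewner {n : ℕ} (A B : Matrix (Fin n) (Fin n) ℂ) : Prop := (B - A).PosSemidef

/-- A function `f : (0,∞) → ℝ` is operator convex. -/
def OperatorConvex (f : ℝ → ℝ) : Prop :=
  ∀ (n : ℕ) (A B : Matrix (Fin n) (Fin n) ℂ), A.PosDef → B.PosDef →
    ∀ t : ℝ, 0 ≤ t → t ≤ 1 →
      Loewner (mfun f ((t : ℂ) • A + ((1 - t : ℝ) : ℂ) • B))
        ((t : ℂ) • mfun f A + ((1 - t : ℝ) : ℂ) • mfun f B)

/-- A function `f : (0,∞) → ℝ` is operator monotone decreasing. -/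
def OperatorAntitone (f : ℝ → ℝ) : Prop :=
  ∀ (n : ℕ) (A B : Matrix (Fin n) (Fin n) ℂ), A.PosDef → B.PosDef →
    Loewner A B → Loewner (mfun f B) (mfun f A)

/-!
By Stinespring, `T*` is the compression `Z ↦ V* (Z ⊗ I) V`. With
`X = σ_T^{-1/2} Γ_T^{1/2} σ_T^{1/2}` the hypothesis says that `σ^{1/2} V*` intertwines `X ⊗ I`
with `Γ^{1/2}`, so compressing `X² ⊗ I` gives `σ^{-1/2} Γ σ^{1/2} = σ^{-1} ρ`, while
`X² = σ_T^{-1} ρ_T`.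
-/

section FunctionalCalculus

variable {d : ℕ} {A B : Matrix (Fin d) (Fin d) ℂ}

lemma mfun_eq_cfc (hA : A.IsHermitian) (f : ℝ → ℝ) : mfun f A = cfc f A := by
  rw [mfun, dif_pos hA, hA.cfc_eq]

lemma isHermitian_mfun (f : ℝ → ℝ) (A : Matrix (Fin d) (Fin d) ℂ) :
    (mfun f A).IsHermitian := by
  unfold mfun
  split_ifs with hA
  · rw [← hA.cfc_eq]; exact cfc_predicate f A
  · exact isHermitian_zero

lemma mfun_mul_mfun (hA : A.IsHermitian) (f g : ℝ → ℝ) :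
    mfun f A * mfun g A = mfun (fun x => f x * g x) A := by
  simp only [mfun_eq_cfc hA]
  exact (cfc_mul f g A (A.finite_real_spectrum.continuousOn _)
    (A.finite_real_spectrum.continuousOn _)).symm

lemma mfun_congr (hA : A.IsHermitian) {f g : ℝ → ℝ}
    (h : ∀ i, f (hA.eigenvalues i) = g (hA.eigenvalues i)) : mfun f A = mfun g A := by
  simp only [mfun_eq_cfc hA]
  refine cfc_congr fun x hx => ?_
  obtain ⟨i, rfl⟩ := hA.spectrum_real_eq_range_eigenvalues ▸ hx
  exact h i

lemma mfun_id (hA : A.IsHermitian) : mfun id A = A := by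
  rw [mfun_eq_cfc hA, cfc_id ℝ A]

lemma mfun_one (hA : A.IsHermitian) : mfun 1 A = 1 := by
  rw [mfun_eq_cfc hA, cfc_one ℝ A]

lemma msqrt_mul_msqrt (hA : A.PosSemidef) : msqrt A * msqrt A = A := by
  rw [msqrt, mfun_mul_mfun hA.1, mfun_congr hA.1 (g := id)
    fun i => Real.mul_self_sqrt (hA.eigenvalues_nonneg i), mfun_id hA.1]

lemma misqrt_mul_msqrt (hA : A.PosDef) : misqrt A * msqrt A = 1 := by
  rw [misqrt, msqrt, mfun_mul_mfun hA.1, mfun_congr hA.1 (g := 1)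
    fun i => inv_mul_cancel₀ (Real.sqrt_pos.2 (hA.eigenvalues_pos i)).ne', mfun_one hA.1]

lemma msqrt_mul_misqrt (hA : A.PosDef) : msqrt A * misqrt A = 1 := by
  rw [misqrt, msqrt, mfun_mul_mfun hA.1, mfun_congr hA.1 (g := 1)
    fun i => mul_inv_cancel₀ (Real.sqrt_pos.2 (hA.eigenvalues_pos i)).ne', mfun_one hA.1]

lemma misqrt_mul_misqrt (hA : A.PosDef) : misqrt A * misqrt A = minv A := by
  rw [misqrt, minv, mfun_mul_mfun hA.1]
  refine mfun_congr hA.1 fun i => ?_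
  rw [← mul_inv, Real.mul_self_sqrt (hA.eigenvalues_pos i).le]

lemma posSemidef_misqrt_mul_mul_misqrt (A : Matrix (Fin d) (Fin d) ℂ) (hB : B.PosSemidef) :
    (misqrt A * B * misqrt A).PosSemidef := by
  have hA : (misqrt A).IsHermitian := isHermitian_mfun _ A
  simpa only [hA.eq] using hB.conjTranspose_mul_mul_same (misqrt A)

lemma msqrt_mul_msqrt_mul_msqrt (hA : A.PosDef) (hB : B.PosSemidef) :
    msqrt (misqrt A * B * misqrt A) * msqrt (misqrt A * B * misqrt A) * msqrt A =
      misqrt A * B := by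
  rw [msqrt_mul_msqrt (posSemidef_misqrt_mul_mul_misqrt A hB), mul_assoc,
    misqrt_mul_msqrt hA, mul_one]

lemma mul_self_misqrt_mul_msqrt_mul_msqrt (hA : A.PosDef) (hB : B.PosSemidef) :
    misqrt A * msqrt (misqrt A * B * misqrt A) * msqrt A *
        (misqrt A * msqrt (misqrt A * B * misqrt A) * msqrt A) = minv A * B := by
  set R := msqrt (misqrt A * B * misqrt A)
  calc misqrt A * R * msqrt A * (misqrt A * R * msqrt A)
      = misqrt A * R * (msqrt A * misqrt A) * R * msqrt A := by simp only [mul_assoc]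
    _ = misqrt A * (R * R * msqrt A) := by rw [msqrt_mul_misqrt hA, mul_one]; simp only [mul_assoc]
    _ = minv A * B := by
      rw [msqrt_mul_msqrt_mul_msqrt hA hB, ← mul_assoc, misqrt_mul_misqrt hA]

end FunctionalCalculus

lemma compress_mul_self_of_intertwines {m n R : Type*} [Fintype m] [Fintype n] [DecidableEq m]
    [Semiring R] {V : Matrix n m R} {W : Matrix m n R} {S S' G : Matrix m m R}
    {K : Matrix n n R} (hWV : W * V = 1) (hS : S' * S = 1)
    (h : V * S * W * K = V * G * S * W) :
    W * (K * K) * V = S' * (G * G) * S := by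
  have hSWK : S * W * K = G * S * W := by
    simpa only [← Matrix.mul_assoc, hWV, Matrix.one_mul] using congrArg (W * ·) h
  calc W * (K * K) * V = S' * (S * W * K * K * V) := by
        simp only [← Matrix.mul_assoc, hS, Matrix.one_mul]
    _ = S' * (G * S * W * K * V) := by rw [hSWK]
    _ = S' * (G * (S * W * K) * V) := by simp only [Matrix.mul_assoc]
    _ = S' * (G * (G * S * W) * V) := by rw [hSWK]
    _ = S' * (G * G) * S := by simp only [Matrix.mul_assoc, hWV, Matrix.mul_one]

section Stinespring

variable {d₁ d₂ s : ℕ}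

lemma trace_conjTranspose_mul_kronecker_one (M : Matrix (Fin d₂ × Fin s) (Fin d₂ × Fin s) ℂ)
    (Z : Matrix (Fin d₂) (Fin d₂) ℂ) :
    (Mᴴ * (Z ⊗ₖ (1 : Matrix (Fin s) (Fin s) ℂ))).trace = ((ptrace2 M)ᴴ * Z).trace := by
  simp only [Matrix.trace, Matrix.diag, Matrix.mul_apply, Matrix.conjTranspose_apply,
    ptrace2, Matrix.of_apply, Matrix.kroneckerMap_apply, Matrix.one_apply,
    Fintype.sum_prod_type, star_sum, Finset.sum_mul, mul_ite, mul_one, mul_zero,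
    Finset.sum_ite_eq', Finset.mem_univ, if_true]
  exact Finset.sum_congr rfl fun _ _ => Finset.sum_comm

lemma adjoint_eq_of_stinespring
    {T : Matrix (Fin d₁) (Fin d₁) ℂ → Matrix (Fin d₂) (Fin d₂) ℂ}
    {Tadj : Matrix (Fin d₂) (Fin d₂) ℂ → Matrix (Fin d₁) (Fin d₁) ℂ}
    (hTadj : ∀ X Y, ((T Y)ᴴ * X).trace = (Yᴴ * Tadj X).trace)
    {V : Matrix (Fin d₂ × Fin s) (Fin d₁) ℂ} (hSt : ∀ ω, T ω = ptrace2 (V * ω * Vᴴ))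
    (Z : Matrix (Fin d₂) (Fin d₂) ℂ) :
    Tadj Z = Vᴴ * (Z ⊗ₖ (1 : Matrix (Fin s) (Fin s) ℂ)) * V := by
  refine Matrix.ext_iff_trace_mul_left.2 fun Y => ?_
  rw [← conjTranspose_conjTranspose Y, ← hTadj, hSt, ← trace_conjTranspose_mul_kronecker_one]
  simp only [conjTranspose_mul, conjTranspose_conjTranspose, Matrix.mul_assoc]
  rw [trace_mul_comm]
  simp only [Matrix.mul_assoc]

end Stinespring

theorem stmt4_general {s : ℕ} {d₁ d₂ : ℕ}
    (T : Matrix (Fin d₁) (Fin d₁) ℂ →ₗ[ℂ] Matrix (Fin d₂) (Fin d₂) ℂ)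
    (Tadj : Matrix (Fin d₂) (Fin d₂) ℂ → Matrix (Fin d₁) (Fin d₁) ℂ)
    (hTadj : ∀ (X : Matrix (Fin d₂) (Fin d₂) ℂ) (Y : Matrix (Fin d₁) (Fin d₁) ℂ),
      Matrix.trace ((T Y)ᴴ * X) = Matrix.trace (Yᴴ * Tadj X))
    (σ ρ : Matrix (Fin d₁) (Fin d₁) ℂ)
    (hσ : σ.PosDef)
    (hρ : ρ.PosDef)
    (hσT : (T σ).PosDef) (hρT : (T ρ).PosDef)
    (V : Matrix (Fin d₂ × Fin s) (Fin d₁) ℂ)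
    (hV : Vᴴ * V = 1)
    (hSt : ∀ ω : Matrix (Fin d₁) (Fin d₁) ℂ, T ω = ptrace2 (V * ω * Vᴴ))
    (hcond : V * msqrt σ * Vᴴ *
        ((misqrt (T σ) * msqrt (misqrt (T σ) * T ρ * misqrt (T σ)) * msqrt (T σ)) ⊗ₖ
          (1 : Matrix (Fin s) (Fin s) ℂ)) =
      V * msqrt (misqrt σ * ρ * misqrt σ) * msqrt σ * Vᴴ) :
    minv σ * ρ = Tadj (minv (T σ) * T ρ) := by
  set X := misqrt (T σ) * msqrt (misqrt (T σ) * T ρ * misqrt (T σ)) * msqrt (T σ)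
  set G := msqrt (misqrt σ * ρ * misqrt σ)
  have hXX : (X * X) ⊗ₖ (1 : Matrix (Fin s) (Fin s) ℂ) =
      (X ⊗ₖ (1 : Matrix (Fin s) (Fin s) ℂ)) * (X ⊗ₖ (1 : Matrix (Fin s) (Fin s) ℂ)) := by
    rw [← mul_kronecker_mul, one_mul]
  calc minv σ * ρ = misqrt σ * (G * G * msqrt σ) := by
        rw [msqrt_mul_msqrt_mul_msqrt hσ hρ.posSemidef, ← mul_assoc, misqrt_mul_misqrt hσ]
    _ = misqrt σ * (G * G) * msqrt σ := by simp only [mul_assoc]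
    _ = Vᴴ * ((X * X) ⊗ₖ (1 : Matrix (Fin s) (Fin s) ℂ)) * V := by
        rw [hXX, compress_mul_self_of_intertwines hV (misqrt_mul_msqrt hσ) hcond, mul_assoc]
    _ = Tadj (minv (T σ) * T ρ) := by
        rw [adjoint_eq_of_stinespring hTadj hSt,
          mul_self_misqrt_mul_msqrt_mul_msqrt hσT hρT.posSemidef]

theorem stmt4 {s : ℕ} {d₁ d₂ : ℕ}
    (T : Matrix (Fin d₁) (Fin d₁) ℂ →ₗ[ℂ] Matrix (Fin d₂) (Fin d₂) ℂ)
    (hT : IsCPTP T)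
    (Tadj : Matrix (Fin d₂) (Fin d₂) ℂ → Matrix (Fin d₁) (Fin d₁) ℂ)
    (hTadj : ∀ (X : Matrix (Fin d₂) (Fin d₂) ℂ) (Y : Matrix (Fin d₁) (Fin d₁) ℂ),
      Matrix.trace ((T Y)ᴴ * X) = Matrix.trace (Yᴴ * Tadj X))
    (σ ρ : Matrix (Fin d₁) (Fin d₁) ℂ)
    (hσ : σ.PosDef) (hσtr : σ.trace = 1)
    (hρ : ρ.PosDef) (hρtr : ρ.trace = 1)
    (hσT : (T σ).PosDef) (hρT : (T ρ).PosDef)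
    (V : Matrix (Fin d₂ × Fin s) (Fin d₁) ℂ)
    (hV : Vᴴ * V = 1)
    (hSt : ∀ ω : Matrix (Fin d₁) (Fin d₁) ℂ, T ω = ptrace2 (V * ω * Vᴴ))
    (hcond : V * msqrt σ * Vᴴ *
        ((misqrt (T σ) * msqrt (misqrt (T σ) * T ρ * misqrt (T σ)) * msqrt (T σ)) ⊗ₖ
          (1 : Matrix (Fin s) (Fin s) ℂ)) =
      V * msqrt (misqrt σ * ρ * misqrt σ) * msqrt σ * Vᴴ) :
    minv σ * ρ = Tadj (minv (T σ) * T ρ) :=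
  stmt4_general T Tadj hTadj σ ρ hσ hρ hσT hρT V hV hSt hcond
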